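/- With notation as in the context, there exists a real number L such that R·C − C·R = L·Q(g,R) (equality of (0,6)-tensors) if and only if μ = 0, or a = 0, b = 0 and c² + k̃ = 0. In particular, if k̃ > 0 then such an L exists if and only if μ = 0. (This is the pointwise algebraic form of the theorem characterizing Wintgen ideal submanifolds whose tensors R·C − C·R and Q(g,R) are linearly dependent.) -/
import Mathlib


noncomputable section

namespace Wintgen

/-- The standard inner product `g` on `ℝ^n`. -/
def gg (n : ℕ) (x y : Fin n → ℝ) : ℝ := ∑ i, x i * y i

/-- The standard orthonormal basis vectors `E_i` (0-indexed). -/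
def E (n : ℕ) (i : Fin n) : Fin n → ℝ := fun j => if j = i then 1 else 0

/-- Auxiliary: the `j`-th coordinate of `x` (0 if out of range). -/
def coord (n : ℕ) (x : Fin n → ℝ) (j : ℕ) : ℝ := if h : j < n then x ⟨j, h⟩ else 0

/-- The Choi–Lu shape operator `A_1`. -/
def A1 (n : ℕ) (a μ : ℝ) (x : Fin n → ℝ) : Fin n → ℝ := fun i =>
  if (i : ℕ) = 0 then a * x i + μ * coord n x 1
  else if (i : ℕ) = 1 then μ * coord n x 0 + a * x i
  else a * x i

/-- The Choi–Lu shape operator `A_2`. -/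
def A2 (n : ℕ) (b μ : ℝ) (x : Fin n → ℝ) : Fin n → ℝ := fun i =>
  if (i : ℕ) = 0 then (b + μ) * x i
  else if (i : ℕ) = 1 then (b - μ) * x i
  else b * x i

/-- The Choi–Lu shape operator `A_3 = c • id`. -/
def A3 (n : ℕ) (c : ℝ) (x : Fin n → ℝ) : Fin n → ℝ := fun i => c * x i

/-- The Gauss-equation curvature tensor `R`. -/
def Rt (n : ℕ) (a b c μ k : ℝ) (X Y Z W : Fin n → ℝ) : ℝ :=
  (gg n (A1 n a μ X) W * gg n (A1 n a μ Y) Z - gg n (A1 n a μ X) Z * gg n (A1 n a μ Y) W)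
  + (gg n (A2 n b μ X) W * gg n (A2 n b μ Y) Z - gg n (A2 n b μ X) Z * gg n (A2 n b μ Y) W)
  + (gg n (A3 n c X) W * gg n (A3 n c Y) Z - gg n (A3 n c X) Z * gg n (A3 n c Y) W)
  + k * (gg n X W * gg n Y Z - gg n X Z * gg n Y W)

/-- The Ricci tensor `Ricc(X,Y) = ∑ i, R(E_i, X, Y, E_i)`. -/
def Ricc (n : ℕ) (a b c μ k : ℝ) (X Y : Fin n → ℝ) : ℝ :=
  ∑ i, Rt n a b c μ k (E n i) X Y (E n i)

/-- The scalar curvature `τ`. -/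
def tau (n : ℕ) (a b c μ k : ℝ) : ℝ := ∑ i, Ricc n a b c μ k (E n i) (E n i)

/-- The Kulkarni–Nomizu product of two bilinear forms. -/
def KN (n : ℕ) (A B : (Fin n → ℝ) → (Fin n → ℝ) → ℝ) (X1 X2 X3 X4 : Fin n → ℝ) : ℝ :=
  A X1 X4 * B X2 X3 + A X2 X3 * B X1 X4 - A X1 X3 * B X2 X4 - A X2 X4 * B X1 X3

/-- The Weyl conformal curvature tensor `C`. -/
def Ct (n : ℕ) (a b c μ k : ℝ) (X Y Z W : Fin n → ℝ) : ℝ :=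
  Rt n a b c μ k X Y Z W
    - (1 / ((n : ℝ) - 2)) * KN n (gg n) (Ricc n a b c μ k) X Y Z W
    + (tau n a b c μ k / (2 * ((n : ℝ) - 1) * ((n : ℝ) - 2))) * KN n (gg n) (gg n) X Y Z W

/-- The endomorphism `(X ∧_A Y)` applied to `Z`. -/
def wedge (n : ℕ) (A : (Fin n → ℝ) → (Fin n → ℝ) → ℝ) (X Y Z : Fin n → ℝ) : Fin n → ℝ :=
  fun j => A Y Z * X j - A X Z * Y j

/-- The endomorphism determined by `g(Op(X,Y)Z, W) = T(X,Y,Z,W)`: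
its `j`-th component is `T(X,Y,Z,E_j)`. -/
def curvOp (n : ℕ) (T : (Fin n → ℝ) → (Fin n → ℝ) → (Fin n → ℝ) → (Fin n → ℝ) → ℝ)
    (X Y Z : Fin n → ℝ) : Fin n → ℝ := fun j => T X Y Z (E n j)

/-- Derivation-type action of a family of operators on a (0,4)-tensor. -/
def dotT (n : ℕ) (Op : (Fin n → ℝ) → (Fin n → ℝ) → (Fin n → ℝ) → (Fin n → ℝ))
    (T : (Fin n → ℝ) → (Fin n → ℝ) → (Fin n → ℝ) → (Fin n → ℝ) → ℝ)
    (X1 X2 X3 X4 X Y : Fin n → ℝ) : ℝ :=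
  - T (Op X Y X1) X2 X3 X4 - T X1 (Op X Y X2) X3 X4
  - T X1 X2 (Op X Y X3) X4 - T X1 X2 X3 (Op X Y X4)

/-- The (0,6)-tensor `R · C`. -/
def RC (n : ℕ) (a b c μ k : ℝ) :=
  dotT n (fun X Y => curvOp n (Rt n a b c μ k) X Y) (Ct n a b c μ k)

/-- The (0,6)-tensor `C · R`. -/
def CR (n : ℕ) (a b c μ k : ℝ) :=
  dotT n (fun X Y => curvOp n (Ct n a b c μ k) X Y) (Rt n a b c μ k)

/-- The Tachibana tensor `Q(A, T)`. -/
def Q (n : ℕ) (A : (Fin n → ℝ) → (Fin n → ℝ) → ℝ)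
    (T : (Fin n → ℝ) → (Fin n → ℝ) → (Fin n → ℝ) → (Fin n → ℝ) → ℝ) :=
  dotT n (fun X Y => wedge n A X Y) T

lemma gg_comm (n : ℕ) (X Y : Fin n → ℝ) : gg n X Y = gg n Y X :=
  Finset.sum_congr rfl fun i _ => mul_comm _ _

lemma sum_ind (n m : ℕ) (h : m < n) (f : Fin n → ℝ) :
    (∑ i : Fin n, if (i : ℕ) = m then f i else 0) = f ⟨m, h⟩ := by
  rw [Finset.sum_eq_single ⟨m, h⟩]
  · simp
  · intro b _ hb
    rw [if_neg fun hbm => hb (Fin.ext hbm)]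
  · simp

lemma coord_lt (n j : ℕ) (h : j < n) (X : Fin n → ℝ) : coord n X j = X ⟨j, h⟩ := dif_pos h

lemma gg_E_left (n : ℕ) (i : Fin n) (X : Fin n → ℝ) : gg n (E n i) X = X i := by
  simp [gg, E, ite_mul, Finset.sum_ite_eq']

lemma gg_E_right (n : ℕ) (i : Fin n) (X : Fin n → ℝ) : gg n X (E n i) = X i := by
  rw [gg_comm]; exact gg_E_left n i X

lemma coord_E (n m : ℕ) (h : m < n) (i : Fin n) :
    coord n (E n i) m = if (i : ℕ) = m then 1 else 0 := by
  rw [coord_lt n m h]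
  unfold E
  by_cases hh : (i : ℕ) = m
  · rw [if_pos (Fin.ext hh.symm), if_pos hh]
  · rw [if_neg, if_neg hh]
    intro hc
    exact hh (by simpa using (congrArg Fin.val hc).symm)
lemma gg_A1 (n : ℕ) (hn : 2 ≤ n) (a μ : ℝ) (X W : Fin n → ℝ) :
    gg n (A1 n a μ X) W
      = a * gg n X W + μ * (coord n X 0 * coord n W 1 + coord n X 1 * coord n W 0) := by
  have h0 : 0 < n := by omega
  have h1 : 1 < n := by omega
  unfold gg A1
  have key : ∀ i : Fin n,
      (if (i : ℕ) = 0 then a * X i + μ * coord n X 1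
        else if (i : ℕ) = 1 then μ * coord n X 0 + a * X i else a * X i) * W i
      = a * (X i * W i) + ((if (i : ℕ) = 0 then μ * coord n X 1 * W i else 0)
          + (if (i : ℕ) = 1 then μ * coord n X 0 * W i else 0)) := by
    intro i
    by_cases hi0 : (i : ℕ) = 0
    · simp [hi0]; ring
    · by_cases hi1 : (i : ℕ) = 1 <;> simp [hi0, hi1] <;> ring
  simp_rw [key]
  rw [Finset.sum_add_distrib, Finset.sum_add_distrib, ← Finset.mul_sum,
    sum_ind n 0 h0, sum_ind n 1 h1, coord_lt n 0 h0 W, coord_lt n 1 h1 W]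
  ring

lemma gg_A2 (n : ℕ) (hn : 2 ≤ n) (b μ : ℝ) (X W : Fin n → ℝ) :
    gg n (A2 n b μ X) W
      = b * gg n X W + μ * (coord n X 0 * coord n W 0 - coord n X 1 * coord n W 1) := by
  have h0 : 0 < n := by omega
  have h1 : 1 < n := by omega
  unfold gg A2
  have key : ∀ i : Fin n,
      (if (i : ℕ) = 0 then (b + μ) * X i
        else if (i : ℕ) = 1 then (b - μ) * X i else b * X i) * W i
      = b * (X i * W i) + ((if (i : ℕ) = 0 then μ * X i * W i else 0)
          + (if (i : ℕ) = 1 then -(μ * X i * W i) else 0)) := by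
    intro i
    by_cases hi0 : (i : ℕ) = 0
    · simp [hi0]; ring
    · by_cases hi1 : (i : ℕ) = 1 <;> simp [hi0, hi1] <;> ring
  simp_rw [key]
  rw [Finset.sum_add_distrib, Finset.sum_add_distrib, ← Finset.mul_sum,
    sum_ind n 0 h0 (fun i => μ * X i * W i), sum_ind n 1 h1 (fun i => -(μ * X i * W i)),
    coord_lt n 0 h0 W, coord_lt n 1 h1 W, coord_lt n 0 h0 X, coord_lt n 1 h1 X]
  ring

lemma gg_A3 (n : ℕ) (c : ℝ) (X W : Fin n → ℝ) :
    gg n (A3 n c X) W = c * gg n X W := by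
  unfold gg A3
  rw [Finset.mul_sum]
  exact Finset.sum_congr rfl fun i _ => by ring
lemma rcf (n : ℕ) (hn : 2 ≤ n) (a b c μ k : ℝ) (X Y Z W : Fin n → ℝ) :
    Rt n a b c μ k X Y Z W =
      (a^2+b^2+c^2+k) * (gg n X W * gg n Y Z - gg n X Z * gg n Y W)
      + μ * ( (a*(coord n X 0 * coord n W 1 + coord n X 1 * coord n W 0)
               + b*(coord n X 0 * coord n W 0 - coord n X 1 * coord n W 1)) * gg n Y Z
            + gg n X W * (a*(coord n Y 0 * coord n Z 1 + coord n Y 1 * coord n Z 0)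
               + b*(coord n Y 0 * coord n Z 0 - coord n Y 1 * coord n Z 1))
            - (a*(coord n X 0 * coord n Z 1 + coord n X 1 * coord n Z 0)
               + b*(coord n X 0 * coord n Z 0 - coord n X 1 * coord n Z 1)) * gg n Y W
            - gg n X Z * (a*(coord n Y 0 * coord n W 1 + coord n Y 1 * coord n W 0)
               + b*(coord n Y 0 * coord n W 0 - coord n Y 1 * coord n W 1)))
      + 2*μ^2 * (coord n X 0 * coord n Y 1 - coord n X 1 * coord n Y 0)
              * (coord n Z 0 * coord n W 1 - coord n Z 1 * coord n W 0) := by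
  unfold Rt
  rw [gg_A1 n hn a μ X W, gg_A1 n hn a μ Y Z, gg_A1 n hn a μ X Z, gg_A1 n hn a μ Y W,
    gg_A2 n hn b μ X W, gg_A2 n hn b μ Y Z, gg_A2 n hn b μ X Z, gg_A2 n hn b μ Y W,
    gg_A3, gg_A3, gg_A3, gg_A3]
  ring
lemma sum_helper (n : ℕ) (hn : 2 ≤ n) (f : Fin n → ℝ) (C D c0 c1 : ℝ) (X Y : Fin n → ℝ)
    (hf : ∀ i : Fin n, f i = C + D * (X i * Y i)
        + ((if (i : ℕ) = 0 then c0 else 0) + (if (i : ℕ) = 1 then c1 else 0))) :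
    ∑ i : Fin n, f i = (n : ℝ) * C + D * gg n X Y + (c0 + c1) := by
  have h0 : 0 < n := by omega
  have h1 : 1 < n := by omega
  simp_rw [hf]
  rw [Finset.sum_add_distrib, Finset.sum_add_distrib, Finset.sum_add_distrib,
    Finset.sum_const, ← Finset.mul_sum,
    sum_ind n 0 h0 (fun _ => c0), sum_ind n 1 h1 (fun _ => c1)]
  simp [gg, Finset.card_univ, nsmul_eq_mul]

lemma riccf (n : ℕ) (hn : 2 ≤ n) (a b c μ k : ℝ) (X Y : Fin n → ℝ) :
    Ricc n a b c μ k X Y =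
      (a^2+b^2+c^2+k) * ((n : ℝ) - 1) * gg n X Y
      + μ * ((n : ℝ) - 2) * (a*(coord n X 0 * coord n Y 1 + coord n X 1 * coord n Y 0)
          + b*(coord n X 0 * coord n Y 0 - coord n X 1 * coord n Y 1))
      - 2*μ^2 * (coord n X 0 * coord n Y 0 + coord n X 1 * coord n Y 1) := by
  have h0 : 0 < n := by omega
  have h1 : 1 < n := by omega
  unfold Ricc
  rw [sum_helper n hn _ ((a^2+b^2+c^2+k) * gg n X Y
        + μ * (a*(coord n X 0 * coord n Y 1 + coord n X 1 * coord n Y 0)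
          + b*(coord n X 0 * coord n Y 0 - coord n X 1 * coord n Y 1)))
      (-(a^2+b^2+c^2+k))
      (μ * b * gg n X Y - μ * (coord n X 0 * (a * coord n Y 1 + b * coord n Y 0)
          + coord n Y 0 * (a * coord n X 1 + b * coord n X 0)) - 2*μ^2 * (coord n X 1 * coord n Y 1))
      (-(μ * b * gg n X Y) - μ * (coord n X 1 * (a * coord n Y 0 - b * coord n Y 1)
          + coord n Y 1 * (a * coord n X 0 - b * coord n X 1)) - 2*μ^2 * (coord n X 0 * coord n Y 0))
      X Y ?_]
  · ring
  intro i
  rw [rcf n hn a b c μ k (E n i) X Y (E n i)]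
  rw [gg_E_left, gg_E_left, gg_E_right, coord_E n 0 h0 i, coord_E n 1 h1 i]
  unfold E
  simp only [if_pos rfl]
  by_cases hi0 : (i : ℕ) = 0
  · have hi : i = ⟨0, h0⟩ := Fin.ext hi0
    subst hi
    rw [coord_lt n 0 h0 X, coord_lt n 0 h0 Y]
    norm_num
    ring
  · by_cases hi1 : (i : ℕ) = 1
    · have hi : i = ⟨1, h1⟩ := Fin.ext hi1
      subst hi
      rw [coord_lt n 1 h1 X, coord_lt n 1 h1 Y]
      norm_num
      ring
    · simp [hi0, hi1]
      ring
lemma tauf (n : ℕ) (hn : 2 ≤ n) (a b c μ k : ℝ) :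
    tau n a b c μ k = (n : ℝ) * ((n : ℝ) - 1) * (a^2+b^2+c^2+k) - 4*μ^2 := by
  have h0 : 0 < n := by omega
  have h1 : 1 < n := by omega
  unfold tau
  rw [sum_helper n hn _ ((a^2+b^2+c^2+k) * ((n : ℝ) - 1)) 0
      (μ * ((n : ℝ) - 2) * b - 2*μ^2) (-(μ * ((n : ℝ) - 2) * b) - 2*μ^2)
      (fun _ => 0) (fun _ => 0) ?_]
  · ring
  intro i
  rw [riccf n hn a b c μ k (E n i) (E n i)]
  rw [gg_E_left, coord_E n 0 h0 i, coord_E n 1 h1 i]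
  unfold E
  simp only [if_pos rfl]
  by_cases hi0 : (i : ℕ) = 0
  · simp [hi0]; ring
  · by_cases hi1 : (i : ℕ) = 1 <;> simp [hi0, hi1] <;> ring
lemma ccf (n : ℕ) (hn : 4 ≤ n) (a b c μ k : ℝ) (X Y Z W : Fin n → ℝ) :
    Ct n a b c μ k X Y Z W =
      μ^2 * ( 2 * (coord n X 0 * coord n Y 1 - coord n X 1 * coord n Y 0)
                * (coord n Z 0 * coord n W 1 - coord n Z 1 * coord n W 0)
        + 2 * ((n : ℝ) - 2)⁻¹ *
            ( gg n X W * (coord n Y 0 * coord n Z 0 + coord n Y 1 * coord n Z 1)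
            + gg n Y Z * (coord n X 0 * coord n W 0 + coord n X 1 * coord n W 1)
            - gg n X Z * (coord n Y 0 * coord n W 0 + coord n Y 1 * coord n W 1)
            - gg n Y W * (coord n X 0 * coord n Z 0 + coord n X 1 * coord n Z 1))
        - 4 * (((n : ℝ) - 1)⁻¹ * ((n : ℝ) - 2)⁻¹) *
            (gg n X W * gg n Y Z - gg n X Z * gg n Y W) ) := by
  have hn2 : 2 ≤ n := by omega
  have hnr : (4 : ℝ) ≤ (n : ℝ) := by exact_mod_cast hn
  have h2 : ((n : ℝ) - 2) ≠ 0 := by linarith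
  have h1 : ((n : ℝ) - 1) ≠ 0 := by linarith
  unfold Ct KN
  rw [rcf n hn2, riccf n hn2 a b c μ k Y Z, riccf n hn2 a b c μ k X W,
    riccf n hn2 a b c μ k Y W, riccf n hn2 a b c μ k X Z, tauf n hn2]
  field_simp
  ring
/-- Auxiliary vector combination used to express curvature operators. -/
def combo (n : ℕ) (α β γ δ : ℝ) (X Y : Fin n → ℝ) : Fin n → ℝ := fun j =>
  α * X j + β * Y j + ((if (j : ℕ) = 0 then γ else 0) + (if (j : ℕ) = 1 then δ else 0))

lemma gg_combo_left (n : ℕ) (hn : 2 ≤ n) (α β γ δ : ℝ) (X Y U : Fin n → ℝ) :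
    gg n (combo n α β γ δ X Y) U
      = α * gg n X U + β * gg n Y U + (γ * coord n U 0 + δ * coord n U 1) := by
  have h0 : 0 < n := by omega
  have h1 : 1 < n := by omega
  unfold gg combo
  have key : ∀ j : Fin n,
      (α * X j + β * Y j + ((if (j : ℕ) = 0 then γ else 0) + (if (j : ℕ) = 1 then δ else 0))) * U j
      = (α * (X j * U j) + β * (Y j * U j))
        + ((if (j : ℕ) = 0 then γ * U j else 0) + (if (j : ℕ) = 1 then δ * U j else 0)) := by
    intro j
    by_cases hj0 : (j : ℕ) = 0
    · simp [hj0]; ring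
    · by_cases hj1 : (j : ℕ) = 1 <;> simp [hj0, hj1] <;> ring
  simp_rw [key]
  rw [Finset.sum_add_distrib, Finset.sum_add_distrib, Finset.sum_add_distrib,
    ← Finset.mul_sum, ← Finset.mul_sum,
    sum_ind n 0 h0 (fun j => γ * U j), sum_ind n 1 h1 (fun j => δ * U j),
    coord_lt n 0 h0 U, coord_lt n 1 h1 U]

lemma gg_combo_right (n : ℕ) (hn : 2 ≤ n) (α β γ δ : ℝ) (X Y U : Fin n → ℝ) :
    gg n U (combo n α β γ δ X Y)
      = α * gg n X U + β * gg n Y U + (γ * coord n U 0 + δ * coord n U 1) := by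
  rw [gg_comm]; exact gg_combo_left n hn α β γ δ X Y U

lemma coord_combo0 (n : ℕ) (hn : 2 ≤ n) (α β γ δ : ℝ) (X Y : Fin n → ℝ) :
    coord n (combo n α β γ δ X Y) 0 = α * coord n X 0 + β * coord n Y 0 + γ := by
  have h0 : 0 < n := by omega
  rw [coord_lt n 0 h0, coord_lt n 0 h0 X, coord_lt n 0 h0 Y]
  unfold combo
  norm_num

lemma coord_combo1 (n : ℕ) (hn : 2 ≤ n) (α β γ δ : ℝ) (X Y : Fin n → ℝ) :
    coord n (combo n α β γ δ X Y) 1 = α * coord n X 1 + β * coord n Y 1 + δ := by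
  have h1 : 1 < n := by omega
  rw [coord_lt n 1 h1, coord_lt n 1 h1 X, coord_lt n 1 h1 Y]
  unfold combo
  norm_num

lemma wedge_eq (n : ℕ) (X Y Z : Fin n → ℝ) :
    wedge n (gg n) X Y Z = combo n (gg n Y Z) (-(gg n X Z)) 0 0 X Y := by
  funext j
  unfold wedge combo
  norm_num
  ring
lemma curvOp_Rt_eq (n : ℕ) (hn : 2 ≤ n) (a b c μ k : ℝ) (X Y Z : Fin n → ℝ) :
    curvOp n (Rt n a b c μ k) X Y Z
      = combo n
          ((a^2+b^2+c^2+k) * gg n Y Z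
            + μ * (a*(coord n Y 0 * coord n Z 1 + coord n Y 1 * coord n Z 0)
                 + b*(coord n Y 0 * coord n Z 0 - coord n Y 1 * coord n Z 1)))
          (-((a^2+b^2+c^2+k) * gg n X Z
            + μ * (a*(coord n X 0 * coord n Z 1 + coord n X 1 * coord n Z 0)
                 + b*(coord n X 0 * coord n Z 0 - coord n X 1 * coord n Z 1))))
          (μ * gg n Y Z * (a * coord n X 1 + b * coord n X 0)
            - μ * gg n X Z * (a * coord n Y 1 + b * coord n Y 0)
            - 2*μ^2*(coord n X 0 * coord n Y 1 - coord n X 1 * coord n Y 0) * coord n Z 1)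
          (μ * gg n Y Z * (a * coord n X 0 - b * coord n X 1)
            - μ * gg n X Z * (a * coord n Y 0 - b * coord n Y 1)
            + 2*μ^2*(coord n X 0 * coord n Y 1 - coord n X 1 * coord n Y 0) * coord n Z 0)
          X Y := by
  have h0 : 0 < n := by omega
  have h1 : 1 < n := by omega
  funext j
  show Rt n a b c μ k X Y Z (E n j) = _
  rw [rcf n hn a b c μ k X Y Z (E n j)]
  rw [gg_E_right, gg_E_right, coord_E n 0 h0 j, coord_E n 1 h1 j]
  unfold combo
  by_cases hj0 : (j : ℕ) = 0
  · simp [hj0]; ring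
  · by_cases hj1 : (j : ℕ) = 1 <;> simp [hj0, hj1] <;> ring

lemma curvOp_Ct_eq (n : ℕ) (hn : 4 ≤ n) (a b c μ k : ℝ) (X Y Z : Fin n → ℝ) :
    curvOp n (Ct n a b c μ k) X Y Z
      = combo n
          (μ^2 * (2 * ((n : ℝ) - 2)⁻¹ * (coord n Y 0 * coord n Z 0 + coord n Y 1 * coord n Z 1)
            - 4 * (((n : ℝ) - 1)⁻¹ * ((n : ℝ) - 2)⁻¹) * gg n Y Z))
          (-(μ^2 * (2 * ((n : ℝ) - 2)⁻¹ * (coord n X 0 * coord n Z 0 + coord n X 1 * coord n Z 1)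
            - 4 * (((n : ℝ) - 1)⁻¹ * ((n : ℝ) - 2)⁻¹) * gg n X Z)))
          (μ^2 * (-2 * (coord n X 0 * coord n Y 1 - coord n X 1 * coord n Y 0) * coord n Z 1
            + 2 * ((n : ℝ) - 2)⁻¹ * (gg n Y Z * coord n X 0 - gg n X Z * coord n Y 0)))
          (μ^2 * (2 * (coord n X 0 * coord n Y 1 - coord n X 1 * coord n Y 0) * coord n Z 0
            + 2 * ((n : ℝ) - 2)⁻¹ * (gg n Y Z * coord n X 1 - gg n X Z * coord n Y 1)))
          X Y := by
  have h0 : 0 < n := by omega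
  have h1 : 1 < n := by omega
  funext j
  show Ct n a b c μ k X Y Z (E n j) = _
  rw [ccf n hn a b c μ k X Y Z (E n j)]
  rw [gg_E_right, gg_E_right, coord_E n 0 h0 j, coord_E n 1 h1 j]
  unfold combo
  by_cases hj0 : (j : ℕ) = 0
  · simp [hj0]; ring
  · by_cases hj1 : (j : ℕ) = 1 <;> simp [hj0, hj1] <;> ring
lemma gg_E_E (n : ℕ) (i j : Fin n) : gg n (E n i) (E n j) = if i = j then 1 else 0 := by
  rw [gg_E_left]
  rfl

set_option maxHeartbeats 2000000 in
/-- `R·C − C·R` and `Q(g,R)` are linearly dependent iff `μ = 0`, or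
`a = 0`, `b = 0` and `c² + k̃ = 0`; in particular if `k̃ > 0` this is
equivalent to `μ = 0`. -/
theorem statement_9 (n : ℕ) (hn : 4 ≤ n) (a b c μ k : ℝ) :
    ((∃ L : ℝ, ∀ X1 X2 X3 X4 X Y : Fin n → ℝ,
        RC n a b c μ k X1 X2 X3 X4 X Y - CR n a b c μ k X1 X2 X3 X4 X Y
          = L * Q n (gg n) (Rt n a b c μ k) X1 X2 X3 X4 X Y)
      ↔ (μ = 0 ∨ (a = 0 ∧ b = 0 ∧ c ^ 2 + k = 0)))
    ∧ (0 < k →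
      ((∃ L : ℝ, ∀ X1 X2 X3 X4 X Y : Fin n → ℝ,
          RC n a b c μ k X1 X2 X3 X4 X Y - CR n a b c μ k X1 X2 X3 X4 X Y
            = L * Q n (gg n) (Rt n a b c μ k) X1 X2 X3 X4 X Y) ↔ μ = 0)) := by
  have hn2 : 2 ≤ n := by omega
  have h0 : 0 < n := by omega
  have h1' : 1 < n := by omega
  have h2' : 2 < n := by omega
  have h3' : 3 < n := by omega
  have hnr : (4 : ℝ) ≤ (n : ℝ) := by exact_mod_cast hn
  have hden2 : ((n : ℝ) - 2) ≠ 0 := by linarith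
  have hi2ne : ((n : ℝ) - 2)⁻¹ ≠ 0 := inv_ne_zero hden2
  have main : (∃ L : ℝ, ∀ X1 X2 X3 X4 X Y : Fin n → ℝ,
        RC n a b c μ k X1 X2 X3 X4 X Y - CR n a b c μ k X1 X2 X3 X4 X Y
          = L * Q n (gg n) (Rt n a b c μ k) X1 X2 X3 X4 X Y)
      ↔ (μ = 0 ∨ (a = 0 ∧ b = 0 ∧ c ^ 2 + k = 0)) := by
    constructor
    · rintro ⟨L, hL⟩
      by_cases hμ : μ = 0
      · exact Or.inl hμ
      right
      set e0 : Fin n → ℝ := E n ⟨0, h0⟩ with he0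
      set e1 : Fin n → ℝ := E n ⟨1, h1'⟩ with he1
      set e2 : Fin n → ℝ := E n ⟨2, h2'⟩ with he2
      set e3 : Fin n → ℝ := E n ⟨3, h3'⟩ with he3
      have h1 := hL e0 e1 e0 e2 e0 e2
      have h2 := hL e0 e2 e2 e3 e1 e3
      have h3 := hL e0 e2 e2 e3 e3 e0
      have h4 := hL e1 e2 e2 e3 e3 e1
      have h5 := hL e0 e1 e0 e2 e1 e2
      have h6 := hL e0 e1 e1 e2 e0 e2
      simp only [he0, he1, he2, he3, RC, CR, Q, dotT, curvOp_Rt_eq n hn2, curvOp_Ct_eq n hn,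
        wedge_eq, ccf n hn, rcf n hn2, gg_combo_left n hn2, gg_combo_right n hn2,
        coord_combo0 n hn2, coord_combo1 n hn2, gg_E_E, coord_E n 0 h0, coord_E n 1 h1',
        Fin.mk.injEq] at h1 h2 h3 h4 h5 h6
      norm_num at h1 h2 h3 h4 h5 h6
      have ha : a = 0 := by
        have key : a * (μ^3 * 2) = 0 := by linear_combination -h1 - h2
        rcases mul_eq_zero.mp key with h | h
        · exact h
        · exact absurd h (by positivity)
      subst ha
      have hlam : b^2 + c^2 + k = 0 := by
        have key : ((n : ℝ) - 2)⁻¹ * (μ^2 * (b^2 + c^2 + k)) * 4 = 0 := by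
          linear_combination h3 + h4
        rcases mul_eq_zero.mp key with h | h
        · rcases mul_eq_zero.mp h with h' | h'
          · exact absurd h' hi2ne
          · rcases mul_eq_zero.mp h' with h'' | h''
            · exact absurd h'' (pow_ne_zero 2 hμ)
            · exact h''
        · norm_num at h
      have hb : b = 0 := by
        have hi2lt : ((n : ℝ) - 2)⁻¹ < 1 := by
          rw [inv_lt_one_iff₀]
          right; linarith
        have key : b * (μ^4 * (1 - ((n : ℝ) - 2)⁻¹) * 8) = 0 := by
          linear_combination 2*μ*h5 + 2*μ*h6 + b*h6 - b*h5
            - (4*b*μ^2*(1 - ((n : ℝ) - 2)⁻¹)) * hlam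
        rcases mul_eq_zero.mp key with h | h
        · exact h
        · have : μ^4 * (1 - ((n : ℝ) - 2)⁻¹) * 8 ≠ 0 := by
            have h4ne : μ^4 ≠ 0 := pow_ne_zero 4 hμ
            have : (0:ℝ) < 1 - ((n : ℝ) - 2)⁻¹ := by linarith
            positivity
          exact absurd h this
      subst hb
      refine ⟨rfl, rfl, ?_⟩
      nlinarith [hlam]
    · rintro (hμ | ⟨ha, hb, hck⟩)
      · subst hμ
        refine ⟨0, fun X1 X2 X3 X4 X Y => ?_⟩
        simp only [RC, CR, Q, dotT, curvOp_Rt_eq n hn2, curvOp_Ct_eq n hn, wedge_eq,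
          ccf n hn, rcf n hn2, gg_combo_left n hn2, gg_combo_right n hn2,
          coord_combo0 n hn2, coord_combo1 n hn2]
        ring
      · subst ha; subst hb
        have hk : k = -c^2 := by linarith
        subst hk
        refine ⟨-2*μ^2*(((n:ℝ)-2)⁻¹ - 2*(((n:ℝ)-1)⁻¹*((n:ℝ)-2)⁻¹)),
          fun X1 X2 X3 X4 X Y => ?_⟩
        simp only [RC, CR, Q, dotT, curvOp_Rt_eq n hn2, curvOp_Ct_eq n hn, wedge_eq,
          ccf n hn, rcf n hn2, gg_combo_left n hn2, gg_combo_right n hn2,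
          coord_combo0 n hn2, coord_combo1 n hn2]
        ring
  refine ⟨main, fun hk => ?_⟩
  rw [main]
  constructor
  · rintro (hμ | ⟨-, -, hck⟩)
    · exact hμ
    · nlinarith [sq_nonneg c]
  · exact Or.inl

end Wintgen
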